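/- arXiv:1606.02258 — 2 statements merged into one kernel-verified Lean document; each statement's English description precedes it below -/
import Mathlib

section
/- Let σ: ℝ^m → ℝ^m satisfy σ(0)=0 and |σ(ξ₂)-σ(ξ₁)| ≤ N·||ξ₂|^κ - |ξ₁|^κ| for all ξ₁, ξ₂ ∈ ℝ^m, where κ ∈ (0,1) and N > 0. Then for any η with 0 ≤ η ≤ 1-κ and any nonzero ξ₁, ξ₂ ∈ ℝ^m, we have |σ(ξ₂)-σ(ξ₁)| ≤ (κ/(κ+η))·N·(|ξ₂|^{-η} + |ξ₁|^{-η})·|ξ₂-ξ₁|^{κ+η}. -/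
open Real Set

/-
For `0 < a ≤ b` the increment `b ^ κ - a ^ κ = κ ∫_a^b z ^ (κ - 1) dz` is controlled through the
pointwise bound `z ^ (κ - 1) = z ^ (-η) z ^ (κ + η - 1) ≤ a ^ (-η) (z - a) ^ (κ + η - 1)`, valid because
both exponents `-η` and `κ + η - 1` are nonpositive; integrating the right-hand side gives
`κ / (κ + η) · a ^ (-η) (b - a) ^ (κ + η)` (we compare derivatives instead of integrating). Applied
to `a, b` the two norms in either order, this bounds `|‖ξ₂‖ ^ κ - ‖ξ₁‖ ^ κ|`, and `|‖ξ₂‖ - ‖ξ₁‖| ≤ ‖ξ₂ - ξ₁‖`.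
-/

lemma rpow_sub_one_le_rpow_neg_mul_sub_rpow {κ η a x : ℝ} (hη : 0 ≤ η) (hκη : κ + η ≤ 1)
    (ha : 0 < a) (hax : a < x) :
    x ^ (κ - 1) ≤ a ^ (-η) * (x - a) ^ (κ + η - 1) := by
  have hx : 0 < x := ha.trans hax
  calc x ^ (κ - 1) = x ^ (-η) * x ^ (κ + η - 1) := by rw [← rpow_add hx]; ring_nf
    _ ≤ a ^ (-η) * (x - a) ^ (κ + η - 1) :=
      mul_le_mul (rpow_le_rpow_of_nonpos ha hax.le (neg_nonpos.2 hη))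
        (rpow_le_rpow_of_nonpos (sub_pos.2 hax) (by linarith) (by linarith))
        (by positivity) (by positivity)

lemma rpow_sub_rpow_le_of_le {κ η a b : ℝ} (hκ : 0 < κ) (hη : 0 ≤ η) (hκη : κ + η ≤ 1)
    (ha : 0 < a) (hab : a ≤ b) :
    b ^ κ - a ^ κ ≤ κ / (κ + η) * a ^ (-η) * (b - a) ^ (κ + η) := by
  have hκη0 : 0 < κ + η := by linarith
  let f : ℝ → ℝ := fun x => κ / (κ + η) * a ^ (-η) * (x - a) ^ (κ + η) - (x ^ κ - a ^ κ)
  let f' : ℝ → ℝ := fun x => κ * a ^ (-η) * (x - a) ^ (κ + η - 1) - κ * x ^ (κ - 1)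
  have hf' : ∀ x ∈ Ioi a, HasDerivAt f (f' x) x := by
    intro x hx
    have hpow : HasDerivAt (fun x : ℝ => (x - a) ^ (κ + η))
        ((κ + η) * (x - a) ^ (κ + η - 1)) x := by
      simpa using ((hasDerivAt_id x).sub_const a).rpow_const (Or.inl (sub_pos.2 hx).ne')
    have hpow' : HasDerivAt (fun x : ℝ => x ^ κ) (κ * x ^ (κ - 1)) x :=
      hasDerivAt_rpow_const (Or.inl (ha.trans hx).ne')
    refine ((hpow.const_mul _).sub (hpow'.sub_const _)).congr_deriv ?_
    field_simp
    ring
  have hcont : ContinuousOn f (Ici a) :=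
    (continuousOn_const.mul ((continuousOn_id.sub continuousOn_const).rpow_const
      fun _ _ => Or.inr hκη0.le)).sub ((continuousOn_id.rpow_const
      fun _ hx => Or.inl (ha.trans_le hx).ne').sub continuousOn_const)
  have hmono : MonotoneOn f (Ici a) := by
    refine monotoneOn_of_hasDerivWithinAt_nonneg (f' := f') (convex_Ici a) hcont
      (fun x hx => ?_) (fun x hx => ?_) <;> rw [interior_Ici] at hx
    · exact (hf' x hx).hasDerivWithinAt
    · have := rpow_sub_one_le_rpow_neg_mul_sub_rpow hη hκη ha hx
      simp only [f']
      nlinarith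
  have := hmono self_mem_Ici (show b ∈ Ici a from hab) hab
  simp only [f, sub_self, zero_rpow hκη0.ne', mul_zero] at this
  linarith

lemma abs_rpow_sub_rpow_le {κ η a b : ℝ} (hκ : 0 < κ) (hη : 0 ≤ η) (hκη : κ + η ≤ 1)
    (ha : 0 < a) (hb : 0 < b) :
    |b ^ κ - a ^ κ| ≤ κ / (κ + η) * (b ^ (-η) + a ^ (-η)) * |b - a| ^ (κ + η) := by
  have hc : 0 ≤ κ / (κ + η) := by positivity
  rcases le_total a b with hab | hba
  · calc |b ^ κ - a ^ κ| = b ^ κ - a ^ κ :=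
          abs_of_nonneg (sub_nonneg.2 (rpow_le_rpow ha.le hab hκ.le))
      _ ≤ κ / (κ + η) * a ^ (-η) * (b - a) ^ (κ + η) :=
          rpow_sub_rpow_le_of_le hκ hη hκη ha hab
      _ ≤ κ / (κ + η) * (b ^ (-η) + a ^ (-η)) * |b - a| ^ (κ + η) := by
          rw [abs_of_nonneg (sub_nonneg.2 hab)]
          gcongr
          exact le_add_of_nonneg_left (by positivity)
  · calc |b ^ κ - a ^ κ| = a ^ κ - b ^ κ := by
          rw [abs_sub_comm, abs_of_nonneg (sub_nonneg.2 (rpow_le_rpow hb.le hba hκ.le))]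
      _ ≤ κ / (κ + η) * b ^ (-η) * (a - b) ^ (κ + η) :=
          rpow_sub_rpow_le_of_le hκ hη hκη hb hba
      _ ≤ κ / (κ + η) * (b ^ (-η) + a ^ (-η)) * |b - a| ^ (κ + η) := by
          rw [abs_sub_comm, abs_of_nonneg (sub_nonneg.2 hba)]
          gcongr
          exact le_add_of_nonneg_right (by positivity)

lemma abs_norm_rpow_sub_norm_rpow_le {E : Type*} [SeminormedAddCommGroup E] {κ η : ℝ}
    (hκ : 0 < κ) (hη : 0 ≤ η) (hκη : κ + η ≤ 1) {x y : E} (hx : 0 < ‖x‖) (hy : 0 < ‖y‖) :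
    |‖y‖ ^ κ - ‖x‖ ^ κ| ≤ κ / (κ + η) * (‖y‖ ^ (-η) + ‖x‖ ^ (-η)) * ‖y - x‖ ^ (κ + η) :=
  (abs_rpow_sub_rpow_le hκ hη hκη hx hy).trans <| by
    gcongr
    exact abs_norm_sub_norm_le y x

theorem stmt0_general (m : ℕ) (σ : EuclideanSpace ℝ (Fin m) → EuclideanSpace ℝ (Fin m))
    (κ N : ℝ) (hκ : κ ∈ Ioo (0:ℝ) 1) (hN : 0 < N)
    (hσ : ∀ ξ₁ ξ₂ : EuclideanSpace ℝ (Fin m),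
      ‖σ ξ₂ - σ ξ₁‖ ≤ N * |‖ξ₂‖ ^ κ - ‖ξ₁‖ ^ κ|)
    (η : ℝ) (hη0 : 0 ≤ η) (hη1 : η ≤ 1 - κ)
    (ξ₁ ξ₂ : EuclideanSpace ℝ (Fin m)) (h₁ : ξ₁ ≠ 0) (h₂ : ξ₂ ≠ 0) :
    ‖σ ξ₂ - σ ξ₁‖ ≤ (κ / (κ + η)) * N * (‖ξ₂‖ ^ (-η) + ‖ξ₁‖ ^ (-η)) * ‖ξ₂ - ξ₁‖ ^ (κ + η) := by
  calc ‖σ ξ₂ - σ ξ₁‖ ≤ N * |‖ξ₂‖ ^ κ - ‖ξ₁‖ ^ κ| := hσ ξ₁ ξ₂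
    _ ≤ N * (κ / (κ + η) * (‖ξ₂‖ ^ (-η) + ‖ξ₁‖ ^ (-η)) * ‖ξ₂ - ξ₁‖ ^ (κ + η)) := by
      gcongr
      exact abs_norm_rpow_sub_norm_rpow_le hκ.1 hη0 (by linarith) (norm_pos_iff.2 h₁)
        (norm_pos_iff.2 h₂)
    _ = _ := by ring

theorem stmt0 (m : ℕ) (σ : EuclideanSpace ℝ (Fin m) → EuclideanSpace ℝ (Fin m))
    (κ N : ℝ) (hκ : κ ∈ Ioo (0:ℝ) 1) (hN : 0 < N)
    (hσ0 : σ 0 = 0)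
    (hσ : ∀ ξ₁ ξ₂ : EuclideanSpace ℝ (Fin m),
      ‖σ ξ₂ - σ ξ₁‖ ≤ N * |‖ξ₂‖ ^ κ - ‖ξ₁‖ ^ κ|)
    (η : ℝ) (hη0 : 0 ≤ η) (hη1 : η ≤ 1 - κ)
    (ξ₁ ξ₂ : EuclideanSpace ℝ (Fin m)) (h₁ : ξ₁ ≠ 0) (h₂ : ξ₂ ≠ 0) :
    ‖σ ξ₂ - σ ξ₁‖ ≤ (κ / (κ + η)) * N * (‖ξ₂‖ ^ (-η) + ‖ξ₁‖ ^ (-η)) * ‖ξ₂ - ξ₁‖ ^ (κ + η) :=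
  stmt0_general m σ κ N hκ hN hσ η hη0 hη1 ξ₁ ξ₂ h₁ h₂
end

section
/- Let γ ∈ (0,1), κ ∈ (0,1) with γ + κ > 1, and let κ⁻ ∈ (1-γ, κ] so that μ := γ(1 + κ⁻/(1-κ)) > 1. Suppose 0 = λ_0 < λ_1 < ⋯ < λ_n = τ is an increasing sequence and y: [0,τ] → ℝ^m satisfies, for each j, |y_t - y_s| ≤ c·2^{-q_j κ⁻}·|t-s|^γ for s,t ∈ [λ_j, λ_{j+1}], where the integers q_j satisfy 2^{-q_j(1-κ)/γ} ≤ c'·(λ_{j+1}-λ_j). Then for all 0 ≤ k < l ≤ n, |y_{λ_l} - y_{λ_k}| ≤ c·(c')^{γκ⁻/(1-κ)}·Σ_{j=k}^{l-1} (λ_{j+1}-λ_j)^μ ≤ c·(c')^{γκ⁻/(1-κ)}·τ^{μ-γ}·|λ_l - λ_k|^γ. -/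
open Real Set Finset

/-!
On each interval `[λ_j, λ_{j+1}]` the scale condition on `q_j` turns the factor `2^{-q_j κ⁻}` into
`(c' (λ_{j+1} - λ_j))^{γκ⁻/(1-κ)}`, so the increment of `y` across the interval is at most
`c (c')^{γκ⁻/(1-κ)} (λ_{j+1} - λ_j)^μ`. Summing by the triangle inequality and using the
superadditivity of `t ↦ t^μ` for `μ ≥ 1` bounds the increment over `[λ_k, λ_l]` by a multiple of
`(λ_l - λ_k)^μ ≤ τ^{μ-γ} (λ_l - λ_k)^γ`.
-/

lemma sum_Ico_sub_rpow_le_sub_rpow {f : ℕ → ℝ} {p : ℝ} (hp : 1 ≤ p) {k l : ℕ} (hkl : k ≤ l)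
    (hf : MonotoneOn f (Set.Icc k l)) :
    ∑ j ∈ Ico k l, (f (j + 1) - f j) ^ p ≤ (f l - f k) ^ p := by
  induction l, hkl using Nat.le_induction with
  | base => simp [zero_rpow (by linarith : p ≠ 0)]
  | succ l hkl ih =>
    have hlk : 0 ≤ f l - f k :=
      sub_nonneg.2 (hf ⟨le_rfl, by omega⟩ ⟨hkl, by omega⟩ hkl)
    have hstep : 0 ≤ f (l + 1) - f l :=
      sub_nonneg.2 (hf ⟨hkl, by omega⟩ ⟨by omega, le_rfl⟩ (by omega))
    calc ∑ j ∈ Ico k (l + 1), (f (j + 1) - f j) ^ p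
        = ∑ j ∈ Ico k l, (f (j + 1) - f j) ^ p + (f (l + 1) - f l) ^ p :=
          sum_Ico_succ_top hkl _
      _ ≤ (f l - f k) ^ p + (f (l + 1) - f l) ^ p := by
          gcongr
          exact ih (hf.mono (Set.Icc_subset_Icc_right (by omega)))
      _ ≤ (f l - f k + (f (l + 1) - f l)) ^ p := add_rpow_le_rpow_add hlk hstep hp
      _ = (f (l + 1) - f k) ^ p := by rw [sub_add_sub_cancel']

lemma rpow_le_rpow_sub_mul_rpow {x T p r : ℝ} (hx : 0 ≤ x) (hxT : x ≤ T) (hrp : r ≤ p)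
    (hp : p ≠ 0) : x ^ p ≤ T ^ (p - r) * x ^ r := by
  calc x ^ p = x ^ (p - r) * x ^ r := by
        rw [← rpow_add' hx (by rwa [sub_add_cancel]), sub_add_cancel]
    _ ≤ T ^ (p - r) * x ^ r := by gcongr

lemma rpow_neg_mul_le_of_rpow_neg_le {b q γ κ κm c' Δ : ℝ} (hb : 0 ≤ b) (hγ : 0 < γ)
    (hκ : κ < 1) (hκm : 0 ≤ κm) (hc' : 0 ≤ c') (hΔ : 0 ≤ Δ)
    (hq : b ^ (-q * (1 - κ) / γ) ≤ c' * Δ) :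
    b ^ (-q * κm) ≤ c' ^ (γ * κm / (1 - κ)) * Δ ^ (γ * κm / (1 - κ)) := by
  have h1κ : 1 - κ ≠ 0 := by linarith
  have hexp : -q * κm = -q * (1 - κ) / γ * (γ * κm / (1 - κ)) := by
    field_simp
  rw [hexp, rpow_mul hb, ← mul_rpow hc' hΔ]
  exact rpow_le_rpow (rpow_nonneg hb _) hq (by positivity)

lemma norm_sub_le_mul_rpow_of_holder {E : Type*} [SeminormedAddCommGroup E] {y : ℝ → E}
    {a b c c' q γ κ κm : ℝ} (hab : a < b) (hc : 0 ≤ c) (hc' : 0 ≤ c') (hγ : 0 < γ)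
    (hκ : κ < 1) (hκm : 0 ≤ κm)
    (hy : ∀ s ∈ Icc a b, ∀ t ∈ Icc a b, ‖y t - y s‖ ≤ c * 2 ^ (-q * κm) * |t - s| ^ γ)
    (hq : (2 : ℝ) ^ (-q * (1 - κ) / γ) ≤ c' * (b - a)) :
    ‖y b - y a‖ ≤ c * c' ^ (γ * κm / (1 - κ)) * (b - a) ^ (γ * (1 + κm / (1 - κ))) := by
  have hΔ : 0 < b - a := sub_pos.2 hab
  have hscale := rpow_neg_mul_le_of_rpow_neg_le zero_le_two hγ hκ hκm hc' hΔ.le hq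
  have hμ : γ * (1 + κm / (1 - κ)) = γ * κm / (1 - κ) + γ := by ring
  calc ‖y b - y a‖ ≤ c * 2 ^ (-q * κm) * |b - a| ^ γ :=
        hy a ⟨le_rfl, hab.le⟩ b ⟨hab.le, le_rfl⟩
    _ ≤ c * (c' ^ (γ * κm / (1 - κ)) * (b - a) ^ (γ * κm / (1 - κ))) * (b - a) ^ γ := by
        rw [abs_of_pos hΔ]
        gcongr
    _ = c * c' ^ (γ * κm / (1 - κ)) * (b - a) ^ (γ * (1 + κm / (1 - κ))) := by
        rw [hμ, rpow_add hΔ]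
        ring

theorem stmt12_general (m : ℕ) (γ κ κm : ℝ)
    (hγ : γ ∈ Ioo (0:ℝ) 1) (hκ : κ ∈ Ioo (0:ℝ) 1)
    (hκm : κm ∈ Ioc (1 - γ) κ)
    (hμ : 1 < γ * (1 + κm / (1 - κ)))
    (n : ℕ) (lam : ℕ → ℝ) (τ : ℝ)
    (hmono : ∀ j < n, lam j < lam (j + 1))
    (hlam0 : lam 0 = 0) (hlamn : lam n = τ)
    (q : ℕ → ℕ) (c c' : ℝ) (hc : 0 < c) (hc' : 0 < c')
    (y : ℝ → EuclideanSpace ℝ (Fin m))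
    (hyhol : ∀ j < n, ∀ s ∈ Icc (lam j) (lam (j + 1)), ∀ t ∈ Icc (lam j) (lam (j + 1)),
      ‖y t - y s‖ ≤ c * 2 ^ (-(q j : ℝ) * κm) * |t - s| ^ γ)
    (hq : ∀ j < n, (2:ℝ) ^ (-(q j : ℝ) * (1 - κ) / γ) ≤ c' * (lam (j + 1) - lam j)) :
    ∀ k l : ℕ, k < l → l ≤ n →
      ‖y (lam l) - y (lam k)‖
        ≤ c * c' ^ (γ * κm / (1 - κ)) *
          ∑ j ∈ Finset.Ico k l, (lam (j + 1) - lam j) ^ (γ * (1 + κm / (1 - κ))) ∧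
      c * c' ^ (γ * κm / (1 - κ)) *
          ∑ j ∈ Finset.Ico k l, (lam (j + 1) - lam j) ^ (γ * (1 + κm / (1 - κ)))
        ≤ c * c' ^ (γ * κm / (1 - κ)) * τ ^ (γ * (1 + κm / (1 - κ)) - γ) *
            (lam l - lam k) ^ γ := by
  intro k l hkl hln
  set e := γ * κm / (1 - κ)
  set μ := γ * (1 + κm / (1 - κ))
  have hκm0 : 0 ≤ κm := by linarith [hγ.2, hκm.1]
  have hlam : MonotoneOn lam (Set.Iic n) :=
    (strictMonoOn_of_lt_add_one ordConnected_Iic fun j _ _ hj => hmono j hj).monotoneOn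
  have hkn : k ∈ Set.Iic n := Set.mem_Iic.2 (by omega)
  have hln' : l ∈ Set.Iic n := Set.mem_Iic.2 hln
  refine ⟨?_, ?_⟩
  · calc ‖y (lam l) - y (lam k)‖ ≤ ∑ j ∈ Ico k l, ‖y (lam (j + 1)) - y (lam j)‖ := by
          simpa [dist_eq_norm, norm_sub_rev] using dist_le_Ico_sum_dist (y ∘ lam) hkl.le
      _ ≤ ∑ j ∈ Ico k l, c * c' ^ e * (lam (j + 1) - lam j) ^ μ := by
          refine sum_le_sum fun j hj => ?_
          have hjn : j < n := by grind
          exact norm_sub_le_mul_rpow_of_holder (hmono j hjn) hc.le hc'.le hγ.1 hκ.2 hκm0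
            (hyhol j hjn) (hq j hjn)
      _ = c * c' ^ e * ∑ j ∈ Ico k l, (lam (j + 1) - lam j) ^ μ := (mul_sum ..).symm
  · have hτ : lam l - lam k ≤ τ := by
      have hk : lam 0 ≤ lam k := hlam (Set.mem_Iic.2 n.zero_le) hkn k.zero_le
      have hl : lam l ≤ lam n := hlam hln' Set.self_mem_Iic hln
      linarith
    calc c * c' ^ e * ∑ j ∈ Ico k l, (lam (j + 1) - lam j) ^ μ
        ≤ c * c' ^ e * (lam l - lam k) ^ μ := by
          gcongr
          exact sum_Ico_sub_rpow_le_sub_rpow hμ.le hkl.le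
            (hlam.mono fun j hj => Set.mem_Iic.2 (hj.2.trans hln))
      _ ≤ c * c' ^ e * (τ ^ (μ - γ) * (lam l - lam k) ^ γ) := by
          gcongr
          exact rpow_le_rpow_sub_mul_rpow (sub_nonneg.2 (hlam hkn hln' hkl.le)) hτ
            (by linarith [hγ.2]) (by positivity)
      _ = c * c' ^ e * τ ^ (μ - γ) * (lam l - lam k) ^ γ := by ring

theorem stmt12 (m : ℕ) (γ κ κm : ℝ)
    (hγ : γ ∈ Ioo (0:ℝ) 1) (hκ : κ ∈ Ioo (0:ℝ) 1) (hγκ : 1 < γ + κ)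
    (hκm : κm ∈ Ioc (1 - γ) κ)
    (hμ : 1 < γ * (1 + κm / (1 - κ)))
    (n : ℕ) (lam : ℕ → ℝ) (τ : ℝ)
    (hmono : ∀ j < n, lam j < lam (j + 1))
    (hlam0 : lam 0 = 0) (hlamn : lam n = τ)
    (q : ℕ → ℕ) (c c' : ℝ) (hc : 0 < c) (hc' : 0 < c')
    (y : ℝ → EuclideanSpace ℝ (Fin m))
    (hyhol : ∀ j < n, ∀ s ∈ Icc (lam j) (lam (j + 1)), ∀ t ∈ Icc (lam j) (lam (j + 1)),
      ‖y t - y s‖ ≤ c * 2 ^ (-(q j : ℝ) * κm) * |t - s| ^ γ)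
    (hq : ∀ j < n, (2:ℝ) ^ (-(q j : ℝ) * (1 - κ) / γ) ≤ c' * (lam (j + 1) - lam j)) :
    ∀ k l : ℕ, k < l → l ≤ n →
      ‖y (lam l) - y (lam k)‖
        ≤ c * c' ^ (γ * κm / (1 - κ)) *
          ∑ j ∈ Finset.Ico k l, (lam (j + 1) - lam j) ^ (γ * (1 + κm / (1 - κ))) ∧
      c * c' ^ (γ * κm / (1 - κ)) *
          ∑ j ∈ Finset.Ico k l, (lam (j + 1) - lam j) ^ (γ * (1 + κm / (1 - κ)))
        ≤ c * c' ^ (γ * κm / (1 - κ)) * τ ^ (γ * (1 + κm / (1 - κ)) - γ) *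
            (lam l - lam k) ^ γ :=
  stmt12_general m γ κ κm hγ hκ hκm hμ n lam τ hmono hlam0 hlamn q c c' hc hc' y hyhol hq
end
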